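/- Let b, c ∈ ℝ³ be constant vectors with ⟨b, c⟩ = 0 and c ≠ 0. Define f(x) = ‖x‖ + ⟨x, b⟩ for x ≠ 0 and v(x) = (∇f(x) × c)/‖c‖². Let x : I → ℝ³ be a solution of ẋ = v(x) with x(t) ≠ 0 for all t ∈ I, and suppose that at some t₀ ∈ I one has ⟨x(t₀), c⟩ = 0 and f(x(t₀)) = ‖c‖². Then for all t ∈ I: ⟨x(t), c⟩ = 0, f(x(t)) = ‖c‖², and ẍ(t) = −x(t)/‖x(t)‖³, i.e. the trajectory obeys Newton's inverse-square (Kepler) equation. -/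

import Mathlib

/-! Both `⟨x, c⟩` and `f` are first integrals of `ẋ = v`, because their gradients `c` and `∇f`
are orthogonal to `∇f × c`. Differentiating `v` along a solution gives
`ẍ = ((ẋ/r - ṙ x/r²) × c)/‖c‖²` with `r = ‖x‖`. On the invariant set `∇f ⊥ c`, so `ẋ × c = -∇f`,
and `b` can be expanded in the orthogonal frame `x, x × c` of the plane `c^⊥`; substituting and
using `f(x) = ‖c‖²` leaves `-x/r³`. -/

open Real Set

noncomputable section

/-- Partial derivative in the `k`-th coordinate direction. -/
def pd (k : Fin 3) (f : (Fin 3 → ℝ) → ℝ) (x : Fin 3 → ℝ) : ℝ :=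
  fderiv ℝ f x (Pi.single k 1)

/-- Gradient. -/
def grad (f : (Fin 3 → ℝ) → ℝ) (x : Fin 3 → ℝ) : Fin 3 → ℝ := fun k => pd k f x

/-- Euclidean inner product on ℝ³. -/
def dot (a b : Fin 3 → ℝ) : ℝ := ∑ i, a i * b i

/-- Squared Euclidean norm on ℝ³. -/
def nsq (a : Fin 3 → ℝ) : ℝ := ∑ i, a i ^ 2

/-- Cross product on ℝ³. -/
def cross (a b : Fin 3 → ℝ) : Fin 3 → ℝ :=
  ![a 1 * b 2 - a 2 * b 1, a 2 * b 0 - a 0 * b 2, a 0 * b 1 - a 1 * b 0]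

/-- Curl of a vector field on ℝ³. -/
def rot (u : (Fin 3 → ℝ) → (Fin 3 → ℝ)) (x : Fin 3 → ℝ) : Fin 3 → ℝ :=
  ![pd 1 (fun y => u y 2) x - pd 2 (fun y => u y 1) x,
    pd 2 (fun y => u y 0) x - pd 0 (fun y => u y 2) x,
    pd 0 (fun y => u y 1) x - pd 1 (fun y => u y 0) x]

/-- Euclidean norm on ℝ³. -/
def nrm (x : Fin 3 → ℝ) : ℝ := Real.sqrt (∑ i, x i ^ 2)

open Matrix

lemma cross_eq_crossProduct (a b : Fin 3 → ℝ) : cross a b = a ⨯₃ b := (cross_apply a b).symm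

lemma nsq_eq_dotProduct (a : Fin 3 → ℝ) : nsq a = a ⬝ᵥ a := by
  simp only [nsq, dotProduct, sq]

lemma nrm_eq_sqrt (a : Fin 3 → ℝ) : nrm a = √(a ⬝ᵥ a) := by
  rw [← nsq_eq_dotProduct]; rfl

lemma dotProduct_self_nonneg {n : Type*} [Fintype n] (a : n → ℝ) : 0 ≤ a ⬝ᵥ a :=
  Finset.sum_nonneg fun i _ => mul_self_nonneg (a i)

lemma dotProduct_self_pos {n : Type*} [Fintype n] {a : n → ℝ} (ha : a ≠ 0) : 0 < a ⬝ᵥ a :=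
  (dotProduct_self_nonneg a).lt_of_ne' (dotProduct_self_eq_zero.not.2 ha)

lemma nrm_pos {a : Fin 3 → ℝ} (ha : a ≠ 0) : 0 < nrm a := by
  rw [nrm_eq_sqrt]; exact sqrt_pos.2 (dotProduct_self_pos ha)

lemma nrm_sq (a : Fin 3 → ℝ) : nrm a ^ 2 = a ⬝ᵥ a := by
  rw [nrm_eq_sqrt, sq_sqrt (dotProduct_self_nonneg a)]

lemma IsOpen.eq_of_hasDerivAt_eq_zero {E : Type*} [NormedAddCommGroup E] [NormedSpace ℝ E]
    {g : ℝ → E} {s : Set ℝ} (hs : IsOpen s) (hs' : IsPreconnected s)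
    (hg : ∀ u ∈ s, HasDerivAt g 0 u) {a b : ℝ} (ha : a ∈ s) (hb : b ∈ s) : g a = g b :=
  hs.is_const_of_deriv_eq_zero hs' (fun u hu => (hg u hu).differentiableAt.differentiableWithinAt)
    (fun u hu => (hg u hu).deriv) ha hb

section Curves

variable {t : ℝ}

theorem HasDerivAt.dotProduct {n : Type*} [Fintype n] {γ δ : ℝ → n → ℝ} {γ' δ' : n → ℝ}
    (hγ : HasDerivAt γ γ' t) (hδ : HasDerivAt δ δ' t) :
    HasDerivAt (fun s => γ s ⬝ᵥ δ s) (γ' ⬝ᵥ δ t + γ t ⬝ᵥ δ') t := by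
  simpa only [_root_.dotProduct, ← Finset.sum_add_distrib] using
    HasDerivAt.fun_sum (u := Finset.univ) fun i _ =>
      (hasDerivAt_pi.1 hγ i).fun_mul (hasDerivAt_pi.1 hδ i)

variable {γ : ℝ → Fin 3 → ℝ} {γ' : Fin 3 → ℝ}

theorem HasDerivAt.nrm_comp (hγ : HasDerivAt γ γ' t) (h0 : γ t ≠ 0) :
    HasDerivAt (fun s => nrm (γ s)) (γ t ⬝ᵥ γ' / nrm (γ t)) t := by
  simp only [nrm_eq_sqrt]
  refine ((hγ.dotProduct hγ).sqrt (dotProduct_self_pos h0).ne').congr_deriv ?_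
  rw [dotProduct_comm γ']
  ring

theorem HasDerivAt.crossProduct_const (hγ : HasDerivAt γ γ' t) (c : Fin 3 → ℝ) :
    HasDerivAt (fun s => γ s ⨯₃ c) (γ' ⨯₃ c) t :=
  (LinearMap.toContinuousLinearMap (crossProduct.flip c)).hasFDerivAt.comp_hasDerivAt t hγ

end Curves

/-- `x` and `x ⨯₃ c` are an orthogonal frame of `c^⊥`; this is the expansion of `b` in it. -/
theorem smul_dotProduct_self_sub_smul_of_orthogonal {x b c : Fin 3 → ℝ} (hxc : x ⬝ᵥ c = 0)
    (hbc : b ⬝ᵥ c = 0) :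
    (c ⬝ᵥ c) • ((x ⬝ᵥ x) • b - (b ⬝ᵥ x) • x) = (b ⬝ᵥ x ⨯₃ c) • (x ⨯₃ c) := by
  have hperp : b ⨯₃ x ⨯₃ c = 0 := by
    rw [cross_cross_eq_smul_sub_smul, hbc, hxc, zero_smul, zero_smul, sub_zero]
  have hpar : (c ⬝ᵥ c) • (b ⨯₃ x) = (b ⬝ᵥ x ⨯₃ c) • c := by
    have := cross_cross_eq_smul_sub_smul (b ⨯₃ x) c c
    rw [hperp, map_zero, LinearMap.zero_apply, dotProduct_comm, triple_product_permutation] at this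
    exact (sub_eq_zero.1 this.symm).symm
  rw [← cross_cross_eq_smul_sub_smul' x b x, ← map_smul, hpar, map_smul]

/-- The field `v = (∇f × c)/‖c‖²`, with `∇f(y) = y/‖y‖ + b`. -/
def keplerField (b c y : Fin 3 → ℝ) : Fin 3 → ℝ := (c ⬝ᵥ c)⁻¹ • (((nrm y)⁻¹ • y + b) ⨯₃ c)

section Solution

variable {b c : Fin 3 → ℝ} {γ : ℝ → Fin 3 → ℝ} {t : ℝ}

theorem HasDerivAt.dotProduct_const_of_keplerField
    (hγ : HasDerivAt γ (keplerField b c (γ t)) t) :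
    HasDerivAt (fun s => γ s ⬝ᵥ c) 0 t := by
  refine (hγ.dotProduct (hasDerivAt_const t c)).congr_deriv ?_
  rw [dotProduct_zero, add_zero, keplerField, smul_dotProduct, dotProduct_comm (_ ⨯₃ c),
    dot_cross_self, smul_zero]

theorem HasDerivAt.nrm_add_dotProduct_of_keplerField
    (hγ : HasDerivAt γ (keplerField b c (γ t)) t) (h0 : γ t ≠ 0) :
    HasDerivAt (fun s => nrm (γ s) + γ s ⬝ᵥ b) 0 t := by
  refine ((hγ.nrm_comp h0).add (hγ.dotProduct (hasDerivAt_const t b))).congr_deriv ?_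
  have hgrad : ((nrm (γ t))⁻¹ • γ t + b) ⬝ᵥ keplerField b c (γ t) = 0 := by
    rw [keplerField, dotProduct_smul, dot_self_cross, smul_zero]
  rw [← hgrad, dotProduct_zero, add_zero, add_dotProduct, smul_dotProduct, dotProduct_comm b,
    smul_eq_mul, div_eq_inv_mul]

theorem HasDerivAt.keplerField_comp {γ' : Fin 3 → ℝ} (hγ : HasDerivAt γ γ' t) (h0 : γ t ≠ 0) :
    HasDerivAt (fun s => keplerField b c (γ s))
      ((c ⬝ᵥ c)⁻¹ • (((nrm (γ t))⁻¹ • γ' + (-(γ t ⬝ᵥ γ' / nrm (γ t)) / nrm (γ t) ^ 2) • γ t) ⨯₃ c))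
      t :=
  ((((hγ.nrm_comp h0).inv (nrm_pos h0).ne').fun_smul hγ).add_const b).crossProduct_const c
    |>.const_smul (c ⬝ᵥ c)⁻¹

end Solution

theorem keplerField_acceleration {x b c v : Fin 3 → ℝ} (hx : x ≠ 0) (hc : c ≠ 0)
    (hxc : x ⬝ᵥ c = 0) (hbc : b ⬝ᵥ c = 0) (henergy : nrm x + x ⬝ᵥ b = c ⬝ᵥ c)
    (hv : v = keplerField b c x) :
    (c ⬝ᵥ c)⁻¹ • (((nrm x)⁻¹ • v + (-(x ⬝ᵥ v / nrm x) / nrm x ^ 2) • x) ⨯₃ c)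
      = -(nrm x ^ 3)⁻¹ • x := by
  have hr : nrm x ≠ 0 := (nrm_pos hx).ne'
  have hcc : 0 < c ⬝ᵥ c := dotProduct_self_pos hc
  have hu : ((nrm x)⁻¹ • x + b) ⬝ᵥ c = 0 := by
    rw [add_dotProduct, smul_dotProduct, hxc, hbc, smul_zero, add_zero]
  have hvc : v ⨯₃ c = -((nrm x)⁻¹ • x + b) := by
    rw [hv, keplerField, LinearMap.map_smul₂, cross_cross_eq_smul_sub_smul, hu, zero_smul,
      zero_sub, smul_neg, smul_smul, inv_mul_cancel₀ hcc.ne', one_smul]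
  have hxv : x ⬝ᵥ v = -(c ⬝ᵥ c)⁻¹ * (b ⬝ᵥ x ⨯₃ c) := by
    rw [hv, keplerField, dotProduct_smul, map_add, map_smul, LinearMap.add_apply,
      LinearMap.smul_apply, dotProduct_add, dotProduct_smul, dot_self_cross,
      triple_product_permutation, ← cross_anticomm, dotProduct_neg]
    simp
  have hplane := smul_dotProduct_self_sub_smul_of_orthogonal hxc hbc
  rw [← nrm_sq x, dotProduct_comm b x] at hplane
  rw [map_add, map_smul, map_smul, LinearMap.add_apply, LinearMap.smul_apply,
    LinearMap.smul_apply, hvc, hxv]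
  ext i
  have hplane_i := congrFun hplane i
  simp only [Pi.smul_apply, Pi.add_apply, Pi.neg_apply, Pi.sub_apply, smul_eq_mul] at hplane_i ⊢
  field_simp
  linear_combination -hplane_i - (c ⬝ᵥ c * x i) * henergy

/-- Kepler motion from the Cartesian approach: for `f(x) = ‖x‖ + ⟨x,b⟩` and
`v = (∇f × c)/‖c‖²`, the set `⟨x,c⟩ = 0, f(x) = ‖c‖²` is invariant under the flow of
`ẋ = v(x)` and on it the trajectories obey Newton's inverse-square equation. -/
theorem kepler_from_cartesian
    (b c : Fin 3 → ℝ) (hbc : dot b c = 0) (hc : c ≠ 0)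
    (f : (Fin 3 → ℝ) → ℝ) (hf : ∀ x, f x = nrm x + dot x b)
    (v : (Fin 3 → ℝ) → (Fin 3 → ℝ))
    -- ∇f(x) = x/‖x‖ + b, and v = (∇f × c)/‖c‖²
    (hv : ∀ x, v x = fun k => cross (fun i => x i / nrm x + b i) c k / nsq c)
    (t₁ t₂ : ℝ) (x : ℝ → (Fin 3 → ℝ))
    (hx0 : ∀ t ∈ Ioo t₁ t₂, x t ≠ 0)
    (hx : ∀ t ∈ Ioo t₁ t₂, HasDerivAt x (v (x t)) t)
    (t₀ : ℝ) (ht₀ : t₀ ∈ Ioo t₁ t₂)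
    (h₁ : dot (x t₀) c = 0) (h₂ : f (x t₀) = nsq c) :
    ∀ t ∈ Ioo t₁ t₂,
      dot (x t) c = 0 ∧ f (x t) = nsq c ∧
      HasDerivAt (fun s => v (x s)) (fun i => -(x t i) / (nrm (x t)) ^ 3) t := by
  obtain rfl : v = keplerField b c := funext fun y => by
    have hgrad : (fun i => y i / nrm y + b i) = (nrm y)⁻¹ • y + b := by
      ext i
      rw [Pi.add_apply, Pi.smul_apply, smul_eq_mul, div_eq_inv_mul]
    ext k
    rw [hv, hgrad, cross_eq_crossProduct, keplerField, nsq_eq_dotProduct, Pi.smul_apply,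
      smul_eq_mul]
    exact div_eq_inv_mul _ _
  have hplane : ∀ t ∈ Ioo t₁ t₂, dot (x t) c = 0 := fun t ht =>
    (isOpen_Ioo.eq_of_hasDerivAt_eq_zero isPreconnected_Ioo
      (fun s hs => (hx s hs).dotProduct_const_of_keplerField) ht ht₀).trans h₁
  have henergy : ∀ t ∈ Ioo t₁ t₂, f (x t) = nsq c := fun t ht => by
    simp only [hf] at h₂ ⊢
    exact (isOpen_Ioo.eq_of_hasDerivAt_eq_zero isPreconnected_Ioo
      (fun s hs => (hx s hs).nrm_add_dotProduct_of_keplerField (hx0 s hs)) ht ht₀).trans h₂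
  intro t ht
  refine ⟨hplane t ht, henergy t ht, ((hx t ht).keplerField_comp (hx0 t ht)).congr_deriv ?_⟩
  rw [keplerField_acceleration (hx0 t ht) hc (hplane t ht) hbc
    (by rw [← nsq_eq_dotProduct, ← henergy t ht, hf]; rfl) rfl]
  ext i
  simp [div_eq_inv_mul]
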